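/- arXiv:2109.10289 — 7 statements merged into one kernel-verified Lean document; each statement's English description precedes it below -/
import Mathlib

section
/- Let g : ℝ → ℝ satisfy g(0) = 0 and g'(t) = (1 + 2 g(t)^2)^(-1/2) for t ≥ 0, extended oddly. Then for all t > 0, (1/2) g(t) ≤ t g'(t) ≤ g(t). -/
/-!
Put `φ(t) = g(t) √(1 + 2 g(t)²)`. Differentiating, `φ' = (1 + 4 g²)/(1 + 2 g²) ∈ [1, 2]`, so
`t ≤ φ(t) ≤ 2t` for `t ≥ 0` since `φ(0) = 0`. As `t g'(t) = t / √(1 + 2 g²)`, the two inequalities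
`t ≤ φ(t)` and `φ(t) ≤ 2t` are exactly `t g'(t) ≤ g(t)` and `g(t)/2 ≤ t g'(t)`.
-/

open Real Set

theorem mul_sub_le_sub_le_mul_sub_of_hasDerivAt_Ici {f f' : ℝ → ℝ} {a m M : ℝ}
    (hf : ∀ x, a ≤ x → HasDerivAt f (f' x) x) (hm : ∀ x, a < x → m ≤ f' x)
    (hM : ∀ x, a < x → f' x ≤ M) {t : ℝ} (ht : a ≤ t) :
    m * (t - a) ≤ f t - f a ∧ f t - f a ≤ M * (t - a) := by
  have hcont : ContinuousOn f (Ici a) := fun x hx => (hf x hx).continuousAt.continuousWithinAt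
  have hdiff : DifferentiableOn ℝ f (interior (Ici a)) := fun x hx =>
    (hf x (le_of_lt (interior_Ici.subset hx))).differentiableAt.differentiableWithinAt
  have hderiv : ∀ x ∈ interior (Ici a), deriv f x = f' x := fun x hx =>
    (hf x (le_of_lt (interior_Ici.subset hx))).deriv
  refine ⟨(convex_Ici a).mul_sub_le_image_sub_of_le_deriv hcont hdiff ?_ a self_mem_Ici t ht ht,
    (convex_Ici a).image_sub_le_mul_sub_of_deriv_le hcont hdiff ?_ a self_mem_Ici t ht ht⟩
  · intro x hx
    rw [hderiv x hx]
    exact hm x (interior_Ici.subset hx)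
  · intro x hx
    rw [hderiv x hx]
    exact hM x (interior_Ici.subset hx)

theorem HasDerivAt.mul_sqrt_one_add_two_mul_sq {g : ℝ → ℝ} {g' t : ℝ} (hg : HasDerivAt g g' t) :
    HasDerivAt (fun s => g s * √(1 + 2 * g s ^ 2))
      (g' * (1 + 4 * g t ^ 2) / √(1 + 2 * g t ^ 2)) t := by
  have hpos : 0 < 1 + 2 * g t ^ 2 := by positivity
  have hsqrt : √(1 + 2 * g t ^ 2) ^ 2 = 1 + 2 * g t ^ 2 := sq_sqrt hpos.le
  have hsqrt_ne : √(1 + 2 * g t ^ 2) ≠ 0 := (sqrt_pos.mpr hpos).ne'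
  have hinner : HasDerivAt (fun s => 1 + 2 * g s ^ 2) (2 * (2 * g t * g')) t := by
    simpa using ((hg.pow 2).const_mul 2).const_add 1
  refine (hg.mul (hinner.sqrt hpos.ne')).congr_deriv ?_
  field_simp
  linear_combination g' * hsqrt

theorem one_le_one_add_four_mul_sq_div (x : ℝ) : 1 ≤ (1 + 4 * x ^ 2) / (1 + 2 * x ^ 2) := by
  rw [le_div_iff₀ (by positivity)]
  nlinarith [sq_nonneg x]

theorem one_add_four_mul_sq_div_le_two (x : ℝ) : (1 + 4 * x ^ 2) / (1 + 2 * x ^ 2) ≤ 2 := by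
  rw [div_le_iff₀ (by positivity)]
  nlinarith [sq_nonneg x]

theorem stmt_1_general (g : ℝ → ℝ) (hg0 : g 0 = 0)
    (hgd : ∀ t : ℝ, 0 ≤ t → HasDerivAt g (1 / Real.sqrt (1 + 2 * g t ^ 2)) t) :
    ∀ t : ℝ, 0 < t → (1 / 2) * g t ≤ t * deriv g t ∧ t * deriv g t ≤ g t := by
  intro t ht
  have hφ : ∀ x, 0 ≤ x → HasDerivAt (fun s => g s * √(1 + 2 * g s ^ 2))
      ((1 + 4 * g x ^ 2) / (1 + 2 * g x ^ 2)) x := fun x hx => by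
    convert (hgd x hx).mul_sqrt_one_add_two_mul_sq using 1
    rw [one_div_mul_eq_div, div_div, ← sq, sq_sqrt (by positivity)]
  obtain ⟨hlow, hup⟩ := mul_sub_le_sub_le_mul_sub_of_hasDerivAt_Ici hφ
    (fun x _ => one_le_one_add_four_mul_sq_div (g x))
    (fun x _ => one_add_four_mul_sq_div_le_two (g x)) ht.le
  have hs : 0 < √(1 + 2 * g t ^ 2) := sqrt_pos.mpr (by positivity)
  simp only [hg0, sub_zero, zero_mul] at hlow hup
  rw [(hgd t ht.le).deriv, mul_one_div]
  constructor
  · rw [le_div_iff₀ hs]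
    linarith
  · rw [div_le_iff₀ hs]
    linarith

theorem stmt_1 (g : ℝ → ℝ) (hg0 : g 0 = 0)
    (hgd : ∀ t : ℝ, 0 ≤ t → HasDerivAt g (1 / Real.sqrt (1 + 2 * g t ^ 2)) t)
    (hodd : ∀ t : ℝ, g (-t) = - g t) :
    ∀ t : ℝ, 0 < t → (1 / 2) * g t ≤ t * deriv g t ∧ t * deriv g t ≤ g t :=
  stmt_1_general g hg0 hgd
end

section
/- Let g : ℝ → ℝ satisfy g(0) = 0, g'(t) = (1 + 2 g(t)^2)^(-1/2) for t ≥ 0, extended oddly. Then |g(t)| ≤ 2^(1/4) |t|^(1/2) for all t ∈ ℝ. -/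
/-! `g'(t) = 1/√(1 + 2g²)` gives `(g²)' = 2g/√(1 + 2g²) ≤ √2` on `t ≥ 0`, so `g(t)² ≤ √2 t` there,
and oddness transfers the bound to `t < 0`. -/

open Real

lemma two_mul_div_sqrt_one_add_two_mul_sq_le_sqrt_two (x : ℝ) :
    2 * x * (1 / √(1 + 2 * x ^ 2)) ≤ √2 := by
  have hpos : 0 < √(1 + 2 * x ^ 2) := sqrt_pos.mpr (by positivity)
  have hnum : 2 * x ≤ √2 * √(1 + 2 * x ^ 2) :=
    calc 2 * x ≤ |2 * x| := le_abs_self _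
      _ = √((2 * x) ^ 2) := (sqrt_sq_eq_abs _).symm
      _ ≤ √(2 * (1 + 2 * x ^ 2)) := sqrt_le_sqrt (by nlinarith)
      _ = √2 * √(1 + 2 * x ^ 2) := sqrt_mul zero_le_two _
  rwa [mul_one_div, div_le_iff₀ hpos]

lemma sq_le_mul_of_hasDerivAt {f f' : ℝ → ℝ} {c : ℝ} (hf0 : f 0 = 0)
    (hf : ∀ t, 0 ≤ t → HasDerivAt f (f' t) t) (hbound : ∀ t, 0 ≤ t → 2 * f t * f' t ≤ c)
    {t : ℝ} (ht : 0 ≤ t) : f t ^ 2 ≤ c * t := by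
  have hF : ∀ s, 0 ≤ s → HasDerivAt (fun s => c * s - f s ^ 2) (c - 2 * f s * f' s) s := by
    intro s hs
    refine (((hasDerivAt_id s).const_mul c).sub ((hf s hs).pow 2)).congr_deriv ?_
    norm_num
  have hmono : MonotoneOn (fun s => c * s - f s ^ 2) (Set.Ici 0) := by
    refine monotoneOn_of_deriv_nonneg (convex_Ici 0)
      (fun s hs => (hF s hs).continuousAt.continuousWithinAt) ?_ ?_
    · rw [interior_Ici]
      exact fun s hs => (hF s hs.le).differentiableAt.differentiableWithinAt
    · rw [interior_Ici]
      intro s hs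
      rw [(hF s hs.le).deriv]
      linarith [hbound s hs.le]
  have := hmono Set.self_mem_Ici (Set.mem_Ici.mpr ht) ht
  simp only [hf0, mul_zero, ne_eq, OfNat.ofNat_ne_zero, not_false_eq_true, zero_pow,
    sub_zero] at this
  linarith

lemma abs_apply_abs_of_odd {g : ℝ → ℝ} (hodd : ∀ t, g (-t) = -g t) (t : ℝ) :
    |g (|t|)| = |g t| := by
  rcases abs_choice t with h | h <;> simp [h, hodd]

lemma sqrt_sqrt_two_mul (t : ℝ) :
    √(√2 * t) = (2 : ℝ) ^ ((1 : ℝ) / 4) * t ^ ((1 : ℝ) / 2) := by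
  rw [sqrt_mul (sqrt_nonneg 2), sqrt_eq_rpow, sqrt_eq_rpow, sqrt_eq_rpow,
    ← rpow_mul zero_le_two]
  norm_num

theorem stmt_3 (g : ℝ → ℝ) (hg0 : g 0 = 0)
    (hgd : ∀ t : ℝ, 0 ≤ t → HasDerivAt g (1 / Real.sqrt (1 + 2 * g t ^ 2)) t)
    (hodd : ∀ t : ℝ, g (-t) = - g t) :
    ∀ t : ℝ, |g t| ≤ (2 : ℝ) ^ ((1 : ℝ) / 4) * |t| ^ ((1 : ℝ) / 2) := by
  intro t
  have hsq : g (|t|) ^ 2 ≤ √2 * |t| :=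
    sq_le_mul_of_hasDerivAt hg0 hgd
      (fun s _ => two_mul_div_sqrt_one_add_two_mul_sq_le_sqrt_two (g s)) (abs_nonneg t)
  calc |g t| = |g (|t|)| := (abs_apply_abs_of_odd hodd t).symm
    _ = √(g (|t|) ^ 2) := (sqrt_sq_eq_abs _).symm
    _ ≤ √(√2 * |t|) := sqrt_le_sqrt hsq
    _ = (2 : ℝ) ^ ((1 : ℝ) / 4) * |t| ^ ((1 : ℝ) / 2) := sqrt_sqrt_two_mul |t|
end

section
/- Let g : ℝ → ℝ satisfy g(0) = 0, g'(t) = (1 + 2 g(t)^2)^(-1/2) for t ≥ 0, extended oddly. Then g(t)^2 - g(t) g'(t) t ≥ 0 for all t ∈ ℝ. -/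
/-! For `t ≥ 0` the solution is nonnegative and increasing, so its slope `1 / √(1 + 2 g²)` decreases:
`g` is concave on `[0, ∞)` with `g 0 = 0`, whence `t g'(t) ≤ g t`; multiplying by `g t ≥ 0` gives the
claim. The expression `g² - g g' t` is even because `g` is odd and `g'` is even. -/

open Set

theorem Function.Odd.deriv_neg {f : ℝ → ℝ} (hf : Function.Odd f) (x : ℝ) :
    deriv f (-x) = deriv f x := by
  have hf' : f = fun y => -f (-y) := funext fun y => by rw [hf, neg_neg]
  conv_rhs => rw [hf', deriv.fun_neg, deriv_comp_neg, neg_neg]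

theorem monotoneOn_Ici_of_hasDerivAt_nonneg {f f' : ℝ → ℝ} {a : ℝ}
    (hf : ∀ x ∈ Ici a, HasDerivAt f (f' x) x) (hf' : ∀ x ∈ Ioi a, 0 ≤ f' x) :
    MonotoneOn f (Ici a) := by
  refine monotoneOn_of_hasDerivWithinAt_nonneg (f' := f') (convex_Ici a)
    (fun x hx => (hf x hx).continuousAt.continuousWithinAt) (fun x hx => ?_) (fun x hx => ?_)
  · rw [interior_Ici] at hx
    exact (hf x (mem_Ici_of_Ioi hx)).hasDerivWithinAt
  · rw [interior_Ici] at hx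
    exact hf' x hx

theorem mul_sub_le_sub_of_hasDerivAt_ge {f f' : ℝ → ℝ} {a b : ℝ} (hab : a ≤ b)
    (hf : ∀ x ∈ Icc a b, HasDerivAt f (f' x) x) (hf' : ∀ x ∈ Ioo a b, f' b ≤ f' x) :
    f' b * (b - a) ≤ f b - f a := by
  refine (convex_Icc a b).mul_sub_le_image_sub_of_le_deriv
    (fun x hx => (hf x hx).continuousAt.continuousWithinAt)
    (fun x hx => ?_) (fun x hx => ?_) a (left_mem_Icc.2 hab) b (right_mem_Icc.2 hab) hab
  · rw [interior_Icc] at hx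
    exact (hf x (Ioo_subset_Icc_self hx)).differentiableAt.differentiableWithinAt
  · rw [interior_Icc] at hx
    rw [(hf x (Ioo_subset_Icc_self hx)).deriv]
    exact hf' x hx

section AutonomousODE

variable {φ g : ℝ → ℝ}

theorem monotoneOn_Ici_of_hasDerivAt_comp (hφ : ∀ y, 0 ≤ φ y)
    (hg : ∀ t, 0 ≤ t → HasDerivAt g (φ (g t)) t) : MonotoneOn g (Ici 0) :=
  monotoneOn_Ici_of_hasDerivAt_nonneg hg fun t _ => hφ (g t)

theorem nonneg_of_hasDerivAt_comp (hφ : ∀ y, 0 ≤ φ y) (hg0 : g 0 = 0)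
    (hg : ∀ t, 0 ≤ t → HasDerivAt g (φ (g t)) t) {t : ℝ} (ht : 0 ≤ t) : 0 ≤ g t :=
  hg0 ▸ monotoneOn_Ici_of_hasDerivAt_comp hφ hg self_mem_Ici ht ht

theorem mul_le_of_hasDerivAt_comp (hφ : ∀ y, 0 ≤ φ y) (hφ_anti : AntitoneOn φ (Ici 0))
    (hg0 : g 0 = 0) (hg : ∀ t, 0 ≤ t → HasDerivAt g (φ (g t)) t) {t : ℝ} (ht : 0 ≤ t) :
    φ (g t) * t ≤ g t := by
  have hmono := monotoneOn_Ici_of_hasDerivAt_comp hφ hg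
  have hchord := mul_sub_le_sub_of_hasDerivAt_ge (f' := fun s => φ (g s)) ht
    (fun s hs => hg s hs.1) fun s hs =>
      hφ_anti (nonneg_of_hasDerivAt_comp hφ hg0 hg hs.1.le)
        (nonneg_of_hasDerivAt_comp hφ hg0 hg ht) (hmono hs.1.le ht hs.2.le)
  simpa [hg0] using hchord

end AutonomousODE

theorem antitoneOn_one_div_sqrt_one_add_two_mul_sq :
    AntitoneOn (fun y : ℝ => 1 / √(1 + 2 * y ^ 2)) (Ici 0) := by
  intro x hx y _ hxy
  have hsq : x ^ 2 ≤ y ^ 2 := pow_le_pow_left₀ hx hxy 2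
  dsimp only
  gcongr

theorem stmt_4 (g : ℝ → ℝ) (hg0 : g 0 = 0)
    (hgd : ∀ t : ℝ, 0 ≤ t → HasDerivAt g (1 / Real.sqrt (1 + 2 * g t ^ 2)) t)
    (hodd : ∀ t : ℝ, g (-t) = - g t) :
    ∀ t : ℝ, 0 ≤ g t ^ 2 - g t * deriv g t * t := by
  intro t
  wlog ht : 0 ≤ t
  · have h := this g hg0 hgd hodd (-t) (by linarith)
    rw [hodd, Function.Odd.deriv_neg hodd] at h
    linarith
  have hslope := mul_le_of_hasDerivAt_comp (φ := fun y => 1 / √(1 + 2 * y ^ 2))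
    (fun y => by positivity) antitoneOn_one_div_sqrt_one_add_two_mul_sq hg0 hgd ht
  have hg_nonneg := nonneg_of_hasDerivAt_comp (φ := fun y => 1 / √(1 + 2 * y ^ 2))
    (fun y => by positivity) hg0 hgd ht
  rw [(hgd t ht).deriv, mul_assoc]
  nlinarith [mul_le_mul_of_nonneg_left hslope hg_nonneg]
end

section
/- Let g : ℝ → ℝ satisfy g(0) = 0, g'(t) = (1 + 2 g(t)^2)^(-1/2) for t ≥ 0, extended oddly. Then |g(t) g'(t)| < 1/√2 for all t ∈ ℝ. -/
/-! The derivative of an odd function is even, so the differential equation for `g` holds on all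
of `ℝ`. With `a = g t` the product is then `|a| / √(1 + 2a²)`, which is below `1/√2` because
`2a² < 1 + 2a²`. -/

open Real

theorem HasDerivAt.of_neg_of_odd {𝕜 F : Type*} [NontriviallyNormedField 𝕜] [NormedAddCommGroup F]
    [NormedSpace 𝕜 F] {f : 𝕜 → F} {f' : F} {x : 𝕜} (hodd : ∀ y, f (-y) = -f y)
    (hf : HasDerivAt f f' (-x)) : HasDerivAt f f' x := by
  convert (hf.scomp x (hasDerivAt_neg x)).neg using 1
  · funext y
    simp [hodd]
  · simp

theorem abs_mul_one_div_sqrt_one_add_two_mul_sq_lt (a : ℝ) :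
    |a * (1 / √(1 + 2 * a ^ 2))| < 1 / √2 := by
  have hpos : 0 < √(1 + 2 * a ^ 2) := sqrt_pos.2 (by positivity)
  rw [abs_mul, abs_of_pos (one_div_pos.2 hpos), mul_one_div,
    div_lt_div_iff₀ hpos (sqrt_pos.2 two_pos), one_mul]
  calc |a| * √2 = √(a ^ 2 * 2) := by rw [sqrt_mul (sq_nonneg a), sqrt_sq_eq_abs]
    _ < √(1 + 2 * a ^ 2) := sqrt_lt_sqrt (by positivity) (by linarith)

theorem stmt_7_general (g : ℝ → ℝ)
    (hgd : ∀ t : ℝ, 0 ≤ t → HasDerivAt g (1 / Real.sqrt (1 + 2 * g t ^ 2)) t)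
    (hodd : ∀ t : ℝ, g (-t) = - g t) :
    ∀ t : ℝ, |g t * deriv g t| < 1 / Real.sqrt 2 := by
  have hderiv : ∀ t, HasDerivAt g (1 / √(1 + 2 * g t ^ 2)) t := by
    intro t
    rcases le_or_gt 0 t with ht | ht
    · exact hgd t ht
    · have hneg := hgd (-t) (neg_nonneg.2 ht.le)
      rw [hodd, neg_sq] at hneg
      exact hneg.of_neg_of_odd hodd
  intro t
  rw [(hderiv t).deriv]
  exact abs_mul_one_div_sqrt_one_add_two_mul_sq_lt (g t)

theorem stmt_7 (g : ℝ → ℝ) (hg0 : g 0 = 0)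
    (hgd : ∀ t : ℝ, 0 ≤ t → HasDerivAt g (1 / Real.sqrt (1 + 2 * g t ^ 2)) t)
    (hodd : ∀ t : ℝ, g (-t) = - g t) :
    ∀ t : ℝ, |g t * deriv g t| < 1 / Real.sqrt 2 :=
  stmt_7_general g hgd hodd
end

section
/- Let g : ℝ → ℝ satisfy g(0) = 0, g'(t) = (1 + 2 g(t)^2)^(-1/2) for t ≥ 0, extended oddly. Then g(ts)^2 ≥ t · g(s)^2 for all t ≥ 1 and s ≥ 0. -/
/-!
The derivative of `g ^ 2` on `[0, ∞)` is `2 g / √(1 + 2 g²)`, an increasing function of `g`,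
and `g` itself is increasing there; so `g ^ 2` is convex on `[0, ∞)`. A convex function
vanishing at `0` satisfies `f (a x) ≤ a f x` for `0 ≤ a ≤ 1`; take `a = 1 / t` and `x = t s`.
-/

open Set

theorem ConvexOn.map_smul_le_smul {𝕜 E β : Type*} [Field 𝕜] [LinearOrder 𝕜] [IsStrictOrderedRing 𝕜]
    [AddCommGroup E] [Module 𝕜 E] [AddCommGroup β] [PartialOrder β] [IsOrderedAddMonoid β]
    [Module 𝕜 β] [PosSMulMono 𝕜 β] {s : Set E} {f : E → β} (hf : ConvexOn 𝕜 s f)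
    (h0 : (0 : E) ∈ s) (hf0 : f 0 ≤ 0) {x : E} (hx : x ∈ s) {a : 𝕜} (ha0 : 0 ≤ a)
    (ha1 : a ≤ 1) : f (a • x) ≤ a • f x := by
  have key := hf.2 h0 hx (sub_nonneg.2 ha1) ha0 (sub_add_cancel 1 a)
  rw [smul_zero, zero_add] at key
  calc f (a • x) ≤ (1 - a) • f 0 + a • f x := key
    _ ≤ a • f x := add_le_of_nonpos_left (smul_nonpos_of_nonneg_of_nonpos (sub_nonneg.2 ha1) hf0)

theorem MonotoneOn.convexOn_of_hasDerivAt {D : Set ℝ} (hD : Convex ℝ D) {f f' : ℝ → ℝ}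
    (hf : ∀ x ∈ D, HasDerivAt f (f' x) x) (hf' : MonotoneOn f' D) : ConvexOn ℝ D f := by
  refine MonotoneOn.convexOn_of_deriv hD (fun x hx ↦ (hf x hx).continuousAt.continuousWithinAt)
    (fun x hx ↦ (hf x (interior_subset hx)).differentiableAt.differentiableWithinAt) ?_
  intro x hx y hy hxy
  rw [(hf x (interior_subset hx)).deriv, (hf y (interior_subset hy)).deriv]
  exact hf' (interior_subset hx) (interior_subset hy) hxy

theorem monotoneOn_div_sqrt_one_add_mul_sq {c : ℝ} (hc : 0 ≤ c) :
    MonotoneOn (fun x ↦ x / √(1 + c * x ^ 2)) (Ici 0) := by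
  intro a (ha : 0 ≤ a) b (hb : 0 ≤ b) hab
  have hpos : ∀ x : ℝ, 0 < 1 + c * x ^ 2 := fun x ↦ by positivity
  have hsqrt : ∀ x y : ℝ, 0 ≤ x → x * √(1 + c * y ^ 2) = √(x ^ 2 * (1 + c * y ^ 2)) :=
    fun x y hx ↦ by rw [Real.sqrt_mul' _ (hpos y).le, Real.sqrt_sq hx]
  rw [div_le_div_iff₀ (Real.sqrt_pos.2 (hpos a)) (Real.sqrt_pos.2 (hpos b)), hsqrt a b ha,
    hsqrt b a hb]
  have hsq : a ^ 2 ≤ b ^ 2 := pow_le_pow_left₀ ha hab 2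
  exact Real.sqrt_le_sqrt (by nlinarith)

theorem convexOn_sq_of_hasDerivAt_inv_sqrt {g : ℝ → ℝ} (hg0 : g 0 = 0)
    (hgd : ∀ t : ℝ, 0 ≤ t → HasDerivAt g (1 / √(1 + 2 * g t ^ 2)) t) :
    ConvexOn ℝ (Ici 0) (fun x ↦ g x ^ 2) := by
  have hmono : MonotoneOn g (Ici 0) :=
    monotoneOn_of_hasDerivWithinAt_nonneg (convex_Ici 0)
      (fun x hx ↦ (hgd x hx).continuousAt.continuousWithinAt)
      (fun x hx ↦ (hgd x (interior_subset hx)).hasDerivWithinAt) (fun _ _ ↦ by positivity)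
  have hnonneg : MapsTo g (Ici 0) (Ici 0) := fun x hx ↦ hg0 ▸ hmono self_mem_Ici hx hx
  have hquot := (monotoneOn_div_sqrt_one_add_mul_sq zero_le_two).comp hmono hnonneg
  refine MonotoneOn.convexOn_of_hasDerivAt (convex_Ici 0)
    (f' := fun x ↦ 2 * (g x / √(1 + 2 * g x ^ 2))) (fun x hx ↦ ?_)
    (fun x hx y hy hxy ↦ mul_le_mul_of_nonneg_left (hquot hx hy hxy) zero_le_two)
  exact ((hgd x hx).fun_pow 2).congr_deriv (by push_cast; ring)

theorem stmt_8_general (g : ℝ → ℝ) (hg0 : g 0 = 0)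
    (hgd : ∀ t : ℝ, 0 ≤ t → HasDerivAt g (1 / Real.sqrt (1 + 2 * g t ^ 2)) t) :
    ∀ t : ℝ, 1 ≤ t → ∀ s : ℝ, 0 ≤ s → t * g s ^ 2 ≤ g (t * s) ^ 2 := by
  intro t ht s hs
  have ht0 : 0 < t := zero_lt_one.trans_le ht
  have key := (convexOn_sq_of_hasDerivAt_inv_sqrt hg0 hgd).map_smul_le_smul self_mem_Ici
    (by simp [hg0]) (mem_Ici.2 (mul_nonneg ht0.le hs)) (inv_nonneg.2 ht0.le)
    (inv_le_one_of_one_le₀ ht)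
  rw [smul_eq_mul, smul_eq_mul, inv_mul_cancel_left₀ ht0.ne'] at key
  exact (le_inv_mul_iff₀ ht0).1 key

theorem stmt_8 (g : ℝ → ℝ) (hg0 : g 0 = 0)
    (hgd : ∀ t : ℝ, 0 ≤ t → HasDerivAt g (1 / Real.sqrt (1 + 2 * g t ^ 2)) t)
    (hodd : ∀ t : ℝ, g (-t) = - g t) :
    ∀ t : ℝ, 1 ≤ t → ∀ s : ℝ, 0 ≤ s → t * g s ^ 2 ≤ g (t * s) ^ 2 :=
  stmt_8_general g hg0 hgd
end

section
/- Let g : ℝ → ℝ be the odd function with g(0)=0, g'(t)=(1+2g(t)^2)^(-1/2) for t ≥ 0. For p > 1 and any v, w > 0 and t > 1, g(v + t w)^(p+1) ≥ t^((p+1)/2) · g(v/t + w)^(p+1). -/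
/-!
Write `g' = ψ ∘ g`. The derivative of `x ↦ g (t x) ^ 2 - t g x ^ 2` is
`2 t (g (t x) ψ (g (t x)) - g x ψ (g x))`, which is nonnegative for `t ≥ 1` because `g` is
increasing and nonnegative on `[0, ∞)` and `a ↦ a ψ a` is increasing there; since the function
vanishes at `0`, this gives `t g(s)² ≤ g(t s)²`. Raising to the power `(p + 1) / 2` and taking
`s = v / t + w` gives the claim.
-/

open Set

lemma monotoneOn_Ici_zero_of_hasDerivAt {f f' : ℝ → ℝ} (hf : ∀ x, 0 ≤ x → HasDerivAt f (f' x) x)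
    (hf' : ∀ x, 0 < x → 0 ≤ f' x) : MonotoneOn f (Ici 0) := by
  refine monotoneOn_of_hasDerivWithinAt_nonneg (f' := f') (convex_Ici 0)
    (fun x hx ↦ (hf x hx).continuousAt.continuousWithinAt) (fun x hx ↦ ?_) (fun x hx ↦ ?_)
  · rw [interior_Ici] at hx
    exact (hf x (le_of_lt hx)).hasDerivWithinAt
  · rw [interior_Ici] at hx
    exact hf' x hx

lemma monotoneOn_mul_inv_sqrt_one_add_two_mul_sq :
    MonotoneOn (fun a : ℝ ↦ a * (1 / √(1 + 2 * a ^ 2))) (Ici 0) := by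
  intro a (ha : 0 ≤ a) b _ hab
  have hA : 0 < √(1 + 2 * a ^ 2) := Real.sqrt_pos.2 (by positivity)
  have hB : 0 < √(1 + 2 * b ^ 2) := Real.sqrt_pos.2 (by positivity)
  have hA2 : √(1 + 2 * a ^ 2) ^ 2 = 1 + 2 * a ^ 2 := Real.sq_sqrt (by positivity)
  have hB2 : √(1 + 2 * b ^ 2) ^ 2 = 1 + 2 * b ^ 2 := Real.sq_sqrt (by positivity)
  simp only [mul_one_div]
  rw [div_le_div_iff₀ hA hB]
  nlinarith [sq_nonneg (a * √(1 + 2 * b ^ 2) - b * √(1 + 2 * a ^ 2)),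
    mul_nonneg ha hB.le, mul_nonneg (ha.trans hab) hA.le, sq_nonneg (b - a)]

section Autonomous

variable {g ψ : ℝ → ℝ} (hgd : ∀ x, 0 ≤ x → HasDerivAt g (ψ (g x)) x)
include hgd

lemma monotoneOn_Ici_zero_of_hasDerivAt_comp (hψ : ∀ a, 0 ≤ ψ a) : MonotoneOn g (Ici 0) :=
  monotoneOn_Ici_zero_of_hasDerivAt hgd fun x _ ↦ hψ (g x)

lemma nonneg_of_hasDerivAt_comp_s14 (hg0 : g 0 = 0) (hψ : ∀ a, 0 ≤ ψ a) {x : ℝ} (hx : 0 ≤ x) :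
    0 ≤ g x :=
  hg0 ▸ monotoneOn_Ici_zero_of_hasDerivAt_comp hgd hψ self_mem_Ici hx hx

lemma mul_sq_le_sq_apply_mul (hg0 : g 0 = 0) (hψ : ∀ a, 0 ≤ ψ a)
    (hψmono : MonotoneOn (fun a ↦ a * ψ a) (Ici 0)) {t s : ℝ} (ht : 1 ≤ t) (hs : 0 ≤ s) :
    t * g s ^ 2 ≤ g (t * s) ^ 2 := by
  have hg := monotoneOn_Ici_zero_of_hasDerivAt_comp hgd hψ
  have hg_nonneg : ∀ x, 0 ≤ x → 0 ≤ g x := fun _ ↦ nonneg_of_hasDerivAt_comp_s14 hgd hg0 hψ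
  set F : ℝ → ℝ := fun x ↦ g (t * x) ^ 2 - t * g x ^ 2
  have hF : ∀ x, 0 ≤ x → HasDerivAt F (2 * t * (g (t * x) * ψ (g (t * x)) - g x * ψ (g x))) x := by
    intro x hx
    have hgt : HasDerivAt (fun y ↦ g (t * y)) (ψ (g (t * x)) * t) x :=
      (hgd (t * x) (by positivity)).comp x ((hasDerivAt_id x).const_mul t |>.congr_deriv (mul_one t))
    refine ((hgt.pow 2).sub (((hgd x hx).pow 2).const_mul t)).congr_deriv ?_
    norm_num
    ring
  have hFmono : MonotoneOn F (Ici 0) := by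
    refine monotoneOn_Ici_zero_of_hasDerivAt hF fun x hx ↦ ?_
    have htx : x ≤ t * x := le_mul_of_one_le_left hx.le ht
    have hgx : g x ≤ g (t * x) := hg hx.le (hx.le.trans htx) htx
    have := hψmono (hg_nonneg x hx.le) (hg_nonneg x hx.le |>.trans hgx) hgx
    exact mul_nonneg (by positivity) (sub_nonneg.2 this)
  have := hFmono self_mem_Ici hs hs
  simp only [F, mul_zero, hg0] at this
  linarith

end Autonomous

lemma mul_rpow_le_rpow_of_mul_sq_le {t a b q : ℝ} (ht : 0 ≤ t) (ha : 0 ≤ a) (hb : 0 ≤ b)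
    (hq : 0 ≤ q) (h : t * a ^ 2 ≤ b ^ 2) : t ^ (q / 2) * a ^ q ≤ b ^ q := by
  have hsqrt : √t * a ≤ b := by
    rw [← Real.sqrt_sq ha, ← Real.sqrt_mul ht, ← Real.sqrt_sq hb]
    exact Real.sqrt_le_sqrt h
  rw [Real.rpow_div_two_eq_sqrt q ht, ← Real.mul_rpow (Real.sqrt_nonneg t) ha]
  exact Real.rpow_le_rpow (by positivity) hsqrt hq

theorem stmt_14_general (g : ℝ → ℝ) (hg0 : g 0 = 0)
    (hgd : ∀ t : ℝ, 0 ≤ t → HasDerivAt g (1 / Real.sqrt (1 + 2 * g t ^ 2)) t)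
    (p : ℝ) (hp : 1 < p) :
    ∀ v w t : ℝ, 0 < v → 0 < w → 1 < t →
      t ^ ((p + 1) / 2) * g (v / t + w) ^ (p + 1) ≤ g (v + t * w) ^ (p + 1) := by
  intro v w t hv hw ht
  have hψ : ∀ a : ℝ, 0 ≤ 1 / √(1 + 2 * a ^ 2) := fun a ↦ by positivity
  have hs : 0 ≤ v / t + w := by positivity
  have hts : v + t * w = t * (v / t + w) := by field_simp
  rw [hts]
  exact mul_rpow_le_rpow_of_mul_sq_le (by positivity) (nonneg_of_hasDerivAt_comp_s14 hgd hg0 hψ hs)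
    (nonneg_of_hasDerivAt_comp_s14 hgd hg0 hψ (by positivity)) (by linarith)
    (mul_sq_le_sq_apply_mul hgd hg0 hψ monotoneOn_mul_inv_sqrt_one_add_two_mul_sq ht.le hs)

theorem stmt_14 (g : ℝ → ℝ) (hg0 : g 0 = 0)
    (hgd : ∀ t : ℝ, 0 ≤ t → HasDerivAt g (1 / Real.sqrt (1 + 2 * g t ^ 2)) t)
    (hodd : ∀ t : ℝ, g (-t) = - g t)
    (p : ℝ) (hp : 1 < p) :
    ∀ v w t : ℝ, 0 < v → 0 < w → 1 < t →
      t ^ ((p + 1) / 2) * g (v / t + w) ^ (p + 1) ≤ g (v + t * w) ^ (p + 1) :=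
  stmt_14_general g hg0 hgd p hp
end

section
/- Let g : ℝ → ℝ be the odd function with g(0)=0 and g'(t)=(1+2g(t)²)^(-1/2) for t ≥ 0. Then for fixed w > 0, λ > 0, p > 1, and 2 < θ < p+1, setting t̄ = 2w/(θ-2), one has for all t > t̄: (λ/(p+1))·(-g(w+t)^(p+1) + (θ/2)·g(w+t)^(p+1)·t/(w+t) + g(w)^(p+1)) > 0. -/
theorem stmt_19 (g : ℝ → ℝ) (hg0 : g 0 = 0)
    (hgd : ∀ t : ℝ, 0 ≤ t → HasDerivAt g (1 / Real.sqrt (1 + 2 * g t ^ 2)) t)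
    (hodd : ∀ t : ℝ, g (-t) = - g t)
    (w lam p θ : ℝ) (hw : 0 < w) (hlam : 0 < lam) (hp : 1 < p)
    (hθ : 2 < θ) (hθp : θ < p + 1) :
    ∀ t : ℝ, 2 * w / (θ - 2) < t →
      0 < (lam / (p + 1)) *
        (-(g (w + t) ^ (p + 1)) + (θ / 2) * g (w + t) ^ (p + 1) * t / (w + t) +
          g w ^ (p + 1)) := by
  -- g is strictly monotone on [0, ∞)
  have hmono : StrictMonoOn g (Set.Ici (0 : ℝ)) := by
    apply StrictMonoOn.mono (s := Set.Ici (0:ℝ)) ?_ le_rfl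
    apply strictMonoOn_of_deriv_pos (convex_Ici 0)
    · intro x hx
      exact (hgd x hx).continuousAt.continuousWithinAt
    · intro x hx
      rw [interior_Ici] at hx
      rw [(hgd x (le_of_lt hx)).deriv]
      positivity
  have hgpos : ∀ x : ℝ, 0 < x → 0 < g x := by
    intro x hx
    have := hmono (Set.self_mem_Ici) (Set.mem_Ici.2 hx.le) hx
    rwa [hg0] at this
  intro t ht
  have hθ2 : 0 < θ - 2 := by linarith
  have ht0 : 0 < t := lt_trans (by positivity) ht
  have hwt : 0 < w + t := by linarith
  have hkey : 2 * w < t * (θ - 2) := by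
    rw [div_lt_iff₀ hθ2] at ht; linarith
  have hA : 0 < g (w + t) ^ (p + 1) := Real.rpow_pos_of_pos (hgpos _ hwt) _
  have hB : 0 < g w ^ (p + 1) := Real.rpow_pos_of_pos (hgpos _ hw) _
  have hc : 0 < lam / (p + 1) := by positivity
  apply mul_pos hc
  have hmid : g (w + t) ^ (p + 1) < (θ / 2) * g (w + t) ^ (p + 1) * t / (w + t) := by
    rw [lt_div_iff₀ hwt]
    nlinarith [mul_pos hA ht0]
  linarith
end
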